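/- arXiv:2601.00229 — 2 statements merged into one kernel-verified Lean document; each statement's English description precedes it below -/
import Mathlib

section
/- Let N, L be positive natural numbers, let D : Fin (L+1) → ℕ be layer dimensions, let Â : Matrix (Fin N) (Fin N) ℝ, let ε : ℝ, and set Ã = Â + (1+ε)·I. Assume Ã is invertible. Let Θ l : Matrix (Fin (D l)) (Fin (D (l+1))) ℝ be the frozen weight matrices, let E_a : Matrix (Fin N) (Fin N) ℝ be a topology noise matrix and E_x : Matrix (Fin N) (Fin (D 0)) ℝ a node-feature noise matrix, and let X̂ : Matrix (Fin N) (Fin (D 0)) ℝ be the corrupted input features. Then there exist prompt matrices P l : Matrix (Fin N) (Fin (D l)) ℝ (for l = 0, …, L−1) such that the prompted network output on the corrupted data, defined recursively by Ĥ 0 = X̂ and Ĥ (l+1) = Ã * (Ĥ l + P l) * Θ l, equals the clean network output on the denoised data, defined recursively by H 0 = X̂ − E_x and H (l+1) = (Ã − E_a) * (H l) * Θ l; i.e., Ĥ L = H L. -/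
/-- Theorem 1 of the paper: for an `L`-layer linear GIN with frozen weights `Θ`,
propagation matrix `Ã = Â + (1+ε)·I` (assumed invertible), topology noise `E_a`
and node-feature noise `E_x`, there exist node prompts `P l` such that the
prompted network on the corrupted data equals the clean network on the
denoised data. -/
theorem exists_prompts_compensating_hybrid_noise
    (N L : ℕ) (hN : 0 < N) (hL : 0 < L)
    (D : Fin (L + 1) → ℕ)
    (Ahat : Matrix (Fin N) (Fin N) ℝ) (ε : ℝ)
    (Atil : Matrix (Fin N) (Fin N) ℝ)
    (hAtil : Atil = Ahat + (1 + ε) • (1 : Matrix (Fin N) (Fin N) ℝ))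
    (hinv : IsUnit Atil)
    (Θ : ∀ l : Fin L, Matrix (Fin (D l.castSucc)) (Fin (D l.succ)) ℝ)
    (Ea : Matrix (Fin N) (Fin N) ℝ)
    (Ex : Matrix (Fin N) (Fin (D 0)) ℝ)
    (Xhat : Matrix (Fin N) (Fin (D 0)) ℝ) :
    ∃ P : ∀ l : Fin L, Matrix (Fin N) (Fin (D l.castSucc)) ℝ,
      ∀ (Hhat H : ∀ l : Fin (L + 1), Matrix (Fin N) (Fin (D l)) ℝ),
        Hhat 0 = Xhat →
        (∀ l : Fin L, Hhat l.succ = Atil * (Hhat l.castSucc + P l) * Θ l) →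
        H 0 = Xhat - Ex →
        (∀ l : Fin L, H l.succ = (Atil - Ea) * H l.castSucc * Θ l) →
        Hhat (Fin.last L) = H (Fin.last L) := by
  have hdet : IsUnit Atil.det := (Matrix.isUnit_iff_isUnit_det Atil).mp hinv
  -- canonical clean sequence
  set H' : ∀ l : Fin (L + 1), Matrix (Fin N) (Fin (D l)) ℝ :=
    Fin.induction (Xhat - Ex) (fun l ih => (Atil - Ea) * ih * Θ l) with hH'
  -- canonical prompted sequence: equals Xhat at 0, H' afterwards
  set G : ∀ l : Fin (L + 1), Matrix (Fin N) (Fin (D l)) ℝ :=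
    Fin.induction Xhat (fun l _ => H' l.succ) with hG
  refine ⟨fun l => Atil⁻¹ * ((Atil - Ea) * H' l.castSucc) - G l.castSucc,
    fun Hhat H h0 hrec h0' hrec' => ?_⟩
  have key : ∀ (m : ℕ) (M : Matrix (Fin N) (Fin m) ℝ), Atil * (Atil⁻¹ * M) = M := by
    intro m M
    rw [← Matrix.mul_assoc, Matrix.mul_nonsing_inv _ hdet, Matrix.one_mul]
  have hHeq : ∀ l : Fin (L + 1), H l = H' l := by
    intro l
    induction l using Fin.induction with
    | zero => simpa [hH'] using h0'
    | succ l ih =>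
        rw [hrec' l, ih]
        simp [hH']
  have hGsucc : ∀ l : Fin L, G l.succ = H' l.succ := by
    intro l; simp [hG]
  have hHhateq : ∀ l : Fin (L + 1), Hhat l = G l := by
    intro l
    induction l using Fin.induction with
    | zero => simpa [hG] using h0
    | succ l ih =>
        rw [hrec l, ih, hGsucc l]
        rw [add_sub_cancel, key]
        simp [hH', Matrix.mul_assoc]
  have hlast : Fin.last L = (⟨L - 1, by omega⟩ : Fin L).succ := by
    ext; simp [Fin.last]; omega
  rw [hHhateq, hHeq, hlast, hGsucc]
end

section
/- Let N, L be positive natural numbers, let D : Fin (L+1) → ℕ, let Ã, E_a : Matrix (Fin N) (Fin N) ℝ with Ã invertible, let Θ l : Matrix (Fin (D l)) (Fin (D (l+1))) ℝ, and let X̂ : Matrix (Fin N) (Fin (D 0)) ℝ. Define the denoised hidden states by H 0 = X̂ and H (l+1) = (Ã − E_a) * (H l) * Θ l, and take prompts P l = −(Ã⁻¹ * E_a * (H l)) for l = 0, …, L−1. Then the prompted network output on the corrupted topology, defined by Ĥ 0 = X̂ and Ĥ (l+1) = Ã * (Ĥ l + P l) * Θ l, satisfies Ĥ l = H l for every l ≤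 L; in particular Ĥ L = H L. -/
theorem Matrix.mul_add_neg_nonsing_inv_mul_mul {n m α : Type*} [Fintype n] [DecidableEq n]
    [CommRing α] {A : Matrix n n α} (hA : IsUnit A) (E : Matrix n n α) (X : Matrix n m α) :
    A * (X + -(A⁻¹ * E * X)) = (A - E) * X := by
  rw [Matrix.mul_add, Matrix.mul_neg, Matrix.mul_assoc A⁻¹,
    A.mul_nonsing_inv_cancel_left _ ((A.isUnit_iff_isUnit_det).mp hA), Matrix.sub_mul,
    sub_eq_add_neg]

theorem prompts_compensate_topology_noise_general
    (N L : ℕ)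
    (D : Fin (L + 1) → ℕ)
    (Atil Ea : Matrix (Fin N) (Fin N) ℝ) (hinv : IsUnit Atil)
    (Θ : ∀ l : Fin L, Matrix (Fin (D l.castSucc)) (Fin (D l.succ)) ℝ)
    (Xhat : Matrix (Fin N) (Fin (D 0)) ℝ)
    (H : ∀ l : Fin (L + 1), Matrix (Fin N) (Fin (D l)) ℝ)
    (hH0 : H 0 = Xhat)
    (hH : ∀ l : Fin L, H l.succ = (Atil - Ea) * H l.castSucc * Θ l)
    (P : ∀ l : Fin L, Matrix (Fin N) (Fin (D l.castSucc)) ℝ)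
    (hP : ∀ l : Fin L, P l = -(Atil⁻¹ * Ea * H l.castSucc))
    (Hhat : ∀ l : Fin (L + 1), Matrix (Fin N) (Fin (D l)) ℝ)
    (hHhat0 : Hhat 0 = Xhat)
    (hHhat : ∀ l : Fin L, Hhat l.succ = Atil * (Hhat l.castSucc + P l) * Θ l) :
    ∀ l : Fin (L + 1), Hhat l = H l := by
  intro l
  induction l using Fin.induction with
  | zero => rw [hHhat0, hH0]
  | succ l ih =>
    rw [hHhat l, hH l, hP l, ih, Matrix.mul_add_neg_nonsing_inv_mul_mul hinv]

/-- Topology-noise-only case of Theorem 1: with prompts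
`P l = −(Ã⁻¹ * E_a * H l)` at every layer, the prompted `L`-layer linear GIN
on the corrupted propagation matrix `Ã` reproduces the network on the denoised
propagation matrix `Ã − E_a`, layer by layer. -/
theorem prompts_compensate_topology_noise
    (N L : ℕ) (hN : 0 < N) (hL : 0 < L)
    (D : Fin (L + 1) → ℕ)
    (Atil Ea : Matrix (Fin N) (Fin N) ℝ) (hinv : IsUnit Atil)
    (Θ : ∀ l : Fin L, Matrix (Fin (D l.castSucc)) (Fin (D l.succ)) ℝ)
    (Xhat : Matrix (Fin N) (Fin (D 0)) ℝ)
    (H : ∀ l : Fin (L + 1), Matrix (Fin N) (Fin (D l)) ℝ)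
    (hH0 : H 0 = Xhat)
    (hH : ∀ l : Fin L, H l.succ = (Atil - Ea) * H l.castSucc * Θ l)
    (P : ∀ l : Fin L, Matrix (Fin N) (Fin (D l.castSucc)) ℝ)
    (hP : ∀ l : Fin L, P l = -(Atil⁻¹ * Ea * H l.castSucc))
    (Hhat : ∀ l : Fin (L + 1), Matrix (Fin N) (Fin (D l)) ℝ)
    (hHhat0 : Hhat 0 = Xhat)
    (hHhat : ∀ l : Fin L, Hhat l.succ = Atil * (Hhat l.castSucc + P l) * Θ l) :
    ∀ l : Fin (L + 1), Hhat l = H l :=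
  prompts_compensate_topology_noise_general N L D Atil Ea hinv Θ Xhat H hH0 hH P hP Hhat hHhat0
    hHhat
end
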